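/- Let c > 0, −2c²/9 < g ≤ 0 (so that c² + 4g > 0), ε ∈ {−1, 1}, and let k be a constant with c/2 < k < φ₀^+. Let I be an open interval containing 0 and let φ : I → ℝ be differentiable with φ(0) = k such that for every ξ ∈ I: c/2 < φ(ξ) < φ₀^+, φ(ξ)² + m₁φ(ξ) + m₂ > 0, 2√(φ(ξ)² + m₁φ(ξ) + m₂) + 2φ(ξ) + m₁ > 0, 2√(a₂)·√(φ(ξ)² + m₁φ(ξ) + m₂) + b₂φ(ξ) + m₃ > 0, and φ′(ξ) = ε·(φ(ξ) − φ₀^+)·√(φ(ξ)² + m₁φ(ξ) + m₂)/(2φ(ξ)). Then β₂(φ(ξ)) = β₂(k)·exp(εξ/2) for all ξ ∈ I. (The case ε = −1 is the kink-like wave solution φ₇ of equation (3.13), and ε = 1 is the antikink-like wave solution φ₈ of equation (3.14).) -/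

import Mathlib

/-! With `q x = x ^ 2 + m₁ x + m₂` and `p = φ₀⁺` one has `q p = a₂` and
`b₂ x + m₃ = q' p * (x - p) + 2 q p`, so the three factors of `β₂` are classical antiderivatives:
`log (2 √q + q')` has derivative `1 / √q`, and `log ((2 √a₂ √q + b₂ x + m₃) / (p - x))` has
derivative `√a₂ / ((p - x) √q)`. Since `α₂ = p / √a₂`, the `x`-derivative of `log β₂` is
`-x / ((p - x) √q)`, which the orbit equation turns into `ε / 2`; hence `log β₂ ∘ φ` is affine
with slope `ε / 2` on the convex set `I`. -/

open Real

theorem Convex.eq_add_mul_sub_of_hasDerivAt {s : Set ℝ} (hs : Convex ℝ s) {F : ℝ → ℝ} {r : ℝ}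
    (hF : ∀ t ∈ s, HasDerivAt F r t) {a t : ℝ} (ha : a ∈ s) (ht : t ∈ s) :
    F t = F a + r * (t - a) := by
  have hG : ∀ u ∈ s, HasDerivWithinAt (fun u => F u - r * u) 0 s u := fun u hu =>
    (((hF u hu).sub ((hasDerivAt_id u).const_mul r)).congr_deriv (by simp)).hasDerivWithinAt
  have := hs.norm_image_sub_le_of_norm_hasDerivWithin_le hG (fun _ _ => norm_zero.le) ha ht
  rw [zero_mul, norm_le_zero_iff, sub_eq_zero] at this
  linarith

theorem mul_rpow_div_rpow_eq_exp {N P D : ℝ} (α : ℝ) (hN : 0 < N) (hP : 0 < P) (hD : 0 < D) :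
    N * P ^ α / D ^ α = exp (log N + α * log P - α * log D) := by
  rw [exp_sub, exp_add, exp_log hN, rpow_def_of_pos hP, rpow_def_of_pos hD, mul_comm α,
    mul_comm α]

section MonicQuadratic

variable {b d x : ℝ}

theorem hasDerivAt_sqrt_quadratic (hq : 0 < x ^ 2 + b * x + d) :
    HasDerivAt (fun x => √(x ^ 2 + b * x + d)) ((2 * x + b) / (2 * √(x ^ 2 + b * x + d))) x := by
  have hpoly : HasDerivAt (fun x => x ^ 2 + b * x + d) (2 * x + b) x := by
    simpa using ((hasDerivAt_pow 2 x).add ((hasDerivAt_id x).const_mul b)).add_const d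
  exact hpoly.sqrt hq.ne'

theorem hasDerivAt_log_two_sqrt_quadratic_add (hq : 0 < x ^ 2 + b * x + d)
    (hN : 2 * √(x ^ 2 + b * x + d) + 2 * x + b ≠ 0) :
    HasDerivAt (fun x => log (2 * √(x ^ 2 + b * x + d) + 2 * x + b))
      (√(x ^ 2 + b * x + d))⁻¹ x := by
  have hQ : 0 < √(x ^ 2 + b * x + d) := sqrt_pos.mpr hq
  have := ((((hasDerivAt_sqrt_quadratic hq).const_mul 2).fun_add
    ((hasDerivAt_id' x).const_mul 2)).add_const b).log hN
  refine this.congr_deriv ?_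
  generalize √(x ^ 2 + b * x + d) = Q at hN hQ ⊢
  rw [div_eq_iff hN]
  field_simp
  ring

theorem hasDerivAt_log_two_mul_sqrt_quadratic_add_sub_log {p A β γ : ℝ}
    (hA : A ^ 2 = p ^ 2 + b * p + d) (hβ : β = 2 * p + b) (hγ : γ = 2 * A ^ 2 - β * p)
    (hq : 0 < x ^ 2 + b * x + d) (hxp : p - x ≠ 0)
    (hD : 2 * A * √(x ^ 2 + b * x + d) + β * x + γ ≠ 0) :
    HasDerivAt (fun x => log (2 * A * √(x ^ 2 + b * x + d) + β * x + γ) - log (p - x))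
      (A / ((p - x) * √(x ^ 2 + b * x + d))) x := by
  have := ((((hasDerivAt_sqrt_quadratic hq).const_mul (2 * A)).fun_add
    ((hasDerivAt_id' x).const_mul β)).add_const γ).log hD |>.fun_sub
    (((hasDerivAt_id' x).const_sub p).log hxp)
  refine this.congr_deriv ?_
  have hQ : √(x ^ 2 + b * x + d) ≠ 0 := (sqrt_pos.mpr hq).ne'
  have hQ2 : √(x ^ 2 + b * x + d) ^ 2 = x ^ 2 + b * x + d := sq_sqrt hq.le
  generalize √(x ^ 2 + b * x + d) = Q at hD hQ hQ2 ⊢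
  have key : (p - x) * (A * (2 * x + b) + β * Q) = (A - Q) * (2 * A * Q + β * x + γ) := by
    subst hβ hγ; linear_combination (2 * A) * hQ2 - 2 * A * hA
  generalize 2 * A * Q + β * x + γ = D at hD key ⊢
  field_simp
  linear_combination key

end MonicQuadratic

-- `log β₂` for `q x = x ^ 2 + b x + d`, `p = φ₀⁺`, `A = √a₂`, `β = b₂`, `γ = m₃`.
noncomputable def logFirstIntegral (b d p A β γ x : ℝ) : ℝ :=
  log (2 * √(x ^ 2 + b * x + d) + 2 * x + b) + p / A * log (p - x)
    - p / A * log (2 * A * √(x ^ 2 + b * x + d) + β * x + γ)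

section FirstIntegral

variable {b d p A β γ : ℝ}

theorem hasDerivAt_logFirstIntegral {x : ℝ} (hA : A ^ 2 = p ^ 2 + b * p + d)
    (hβ : β = 2 * p + b) (hγ : γ = 2 * A ^ 2 - β * p) (hA0 : A ≠ 0) (hq : 0 < x ^ 2 + b * x + d)
    (hxp : p - x ≠ 0) (hN : 2 * √(x ^ 2 + b * x + d) + 2 * x + b ≠ 0)
    (hD : 2 * A * √(x ^ 2 + b * x + d) + β * x + γ ≠ 0) :
    HasDerivAt (logFirstIntegral b d p A β γ) (-x / ((p - x) * √(x ^ 2 + b * x + d))) x := by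
  have := (hasDerivAt_log_two_sqrt_quadratic_add hq hN).fun_sub
    ((hasDerivAt_log_two_mul_sqrt_quadratic_add_sub_log hA hβ hγ hq hxp hD).const_mul (p / A))
  have hsplit : logFirstIntegral b d p A β γ = fun x => log (2 * √(x ^ 2 + b * x + d) + 2 * x + b)
      - p / A * (log (2 * A * √(x ^ 2 + b * x + d) + β * x + γ) - log (p - x)) := by
    funext x; unfold logFirstIntegral; ring
  rw [hsplit]
  refine this.congr_deriv ?_
  have hQ : √(x ^ 2 + b * x + d) ≠ 0 := (sqrt_pos.mpr hq).ne'
  generalize √(x ^ 2 + b * x + d) = Q at hQ ⊢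
  field_simp
  ring

theorem hasDerivAt_logFirstIntegral_comp {φ : ℝ → ℝ} {ε t : ℝ}
    (hA : A ^ 2 = p ^ 2 + b * p + d) (hβ : β = 2 * p + b) (hγ : γ = 2 * A ^ 2 - β * p)
    (hA0 : A ≠ 0) (hφ0 : φ t ≠ 0) (hq : 0 < φ t ^ 2 + b * φ t + d) (hφp : p - φ t ≠ 0)
    (hN : 2 * √(φ t ^ 2 + b * φ t + d) + 2 * φ t + b ≠ 0)
    (hD : 2 * A * √(φ t ^ 2 + b * φ t + d) + β * φ t + γ ≠ 0)
    (hφ : HasDerivAt φ (ε * (φ t - p) * √(φ t ^ 2 + b * φ t + d) / (2 * φ t)) t) :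
    HasDerivAt (fun t => logFirstIntegral b d p A β γ (φ t)) (ε / 2) t := by
  refine ((hasDerivAt_logFirstIntegral hA hβ hγ hA0 hq hφp hN hD).comp t hφ).congr_deriv ?_
  have hQ : √(φ t ^ 2 + b * φ t + d) ≠ 0 := (sqrt_pos.mpr hq).ne'
  generalize √(φ t ^ 2 + b * φ t + d) = Q at hQ ⊢
  have hφp' : φ t - p ≠ 0 := sub_ne_zero.mpr (sub_ne_zero.mp hφp).symm
  field_simp
  ring

end FirstIntegral

theorem osmosis_K22_kink_like_c_pos_g_nonpos_general
    (c g : ℝ) (hc : 0 < c) (hg1 : -2 * c ^ 2 / 9 < g)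
    (ε : ℝ)
    (s φ0p m1 m2 m3 a2 b2 α2 : ℝ)
    (hs : s = Real.sqrt (c ^ 2 + 4 * g))
    (hφ0p : φ0p = (c + s) / 2)
    (hm1 : m1 = -(c - 3 * s) / 3)
    (hm2 : m2 = (c ^ 2 + 6 * g + c * s) / 6)
    (hm3 : m3 = (2 / 3) * (c ^ 2 + 6 * g + c * s))
    (ha2 : a2 = c ^ 2 + 4 * g + c * s)
    (hb2 : b2 = (2 * c + 6 * s) / 3)
    (hα2 : α2 = (c + s) / (2 * Real.sqrt a2))
    (β₂ : ℝ → ℝ)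
    (hβ₂ : ∀ x : ℝ, β₂ x =
      (2 * Real.sqrt (x ^ 2 + m1 * x + m2) + 2 * x + m1) * (φ0p - x) ^ α2 /
        (2 * Real.sqrt a2 * Real.sqrt (x ^ 2 + m1 * x + m2) + b2 * x + m3) ^ α2)
    (k : ℝ)
    (I : Set ℝ) (hIconv : Convex ℝ I) (h0I : (0:ℝ) ∈ I)
    (φ : ℝ → ℝ) (hφ0 : φ 0 = k)
    (hrange : ∀ ξ ∈ I, c / 2 < φ ξ ∧ φ ξ < φ0p)
    (hq : ∀ ξ ∈ I, 0 < (φ ξ) ^ 2 + m1 * φ ξ + m2)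
    (hnum : ∀ ξ ∈ I, 0 < 2 * Real.sqrt ((φ ξ) ^ 2 + m1 * φ ξ + m2) + 2 * φ ξ + m1)
    (hden : ∀ ξ ∈ I,
      0 < 2 * Real.sqrt a2 * Real.sqrt ((φ ξ) ^ 2 + m1 * φ ξ + m2) + b2 * φ ξ + m3)
    (horb : ∀ ξ ∈ I, HasDerivAt φ
      (ε * (φ ξ - φ0p) * Real.sqrt ((φ ξ) ^ 2 + m1 * φ ξ + m2) / (2 * φ ξ)) ξ) :
    ∀ ξ ∈ I, β₂ (φ ξ) = β₂ k * Real.exp (ε * ξ / 2) := by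
  have hcg : 0 < c ^ 2 + 4 * g := by nlinarith
  have hs2 : s ^ 2 = c ^ 2 + 4 * g := hs ▸ sq_sqrt hcg.le
  have hs0 : 0 < s := hs ▸ sqrt_pos.mpr hcg
  have ha2pos : 0 < a2 := by rw [ha2]; nlinarith
  have hA : √a2 ^ 2 = φ0p ^ 2 + m1 * φ0p + m2 := by
    rw [sq_sqrt ha2pos.le]; subst ha2 hφ0p hm1 hm2; linear_combination (-3 / 4) * hs2
  have hβ : b2 = 2 * φ0p + m1 := by subst hb2 hφ0p hm1; ring
  have hγ : m3 = 2 * √a2 ^ 2 - b2 * φ0p := by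
    rw [sq_sqrt ha2pos.le]; subst hm3 ha2 hb2 hφ0p; linear_combination hs2
  have hα : α2 = φ0p / √a2 := by rw [hα2, hφ0p]; ring
  have hβexp : ∀ t ∈ I, β₂ (φ t) = exp (logFirstIntegral m1 m2 φ0p √a2 b2 m3 (φ t)) :=
    fun t ht => by
      rw [hβ₂, hα, mul_rpow_div_rpow_eq_exp _ (hnum t ht) (sub_pos.mpr (hrange t ht).2) (hden t ht)]
      rfl
  intro ξ hξ
  have hlin := hIconv.eq_add_mul_sub_of_hasDerivAt (fun t ht =>
    hasDerivAt_logFirstIntegral_comp hA hβ hγ (sqrt_pos.mpr ha2pos).ne'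
      (by linarith [(hrange t ht).1] : 0 < φ t).ne' (hq t ht) (sub_pos.mpr (hrange t ht).2).ne'
      (hnum t ht).ne' (hden t ht).ne' (horb t ht)) h0I hξ
  rw [← hφ0, hβexp ξ hξ, hβexp 0 h0I, hlin, exp_add, sub_zero, div_mul_eq_mul_div]

/-- kink-like (ε = −1, eq. (3.13)) and antikink-like (ε = 1, eq. (3.14))
wave solutions of the osmosis K(2,2) equation for `c > 0`, `−2c²/9 < g ≤ 0`:
a solution of the orbit equation through `k ∈ (c/2, φ₀^+)` satisfies
`β₂(φ(ξ)) = β₂(k)·exp(εξ/2)`. -/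
theorem osmosis_K22_kink_like_c_pos_g_nonpos
    (c g : ℝ) (hc : 0 < c) (hg1 : -2 * c ^ 2 / 9 < g) (hg2 : g ≤ 0)
    (ε : ℝ) (hε : ε = -1 ∨ ε = 1)
    (s φ0p m1 m2 m3 a2 b2 α2 : ℝ)
    (hs : s = Real.sqrt (c ^ 2 + 4 * g))
    (hφ0p : φ0p = (c + s) / 2)
    (hm1 : m1 = -(c - 3 * s) / 3)
    (hm2 : m2 = (c ^ 2 + 6 * g + c * s) / 6)
    (hm3 : m3 = (2 / 3) * (c ^ 2 + 6 * g + c * s))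
    (ha2 : a2 = c ^ 2 + 4 * g + c * s)
    (hb2 : b2 = (2 * c + 6 * s) / 3)
    (hα2 : α2 = (c + s) / (2 * Real.sqrt a2))
    (β₂ : ℝ → ℝ)
    (hβ₂ : ∀ x : ℝ, β₂ x =
      (2 * Real.sqrt (x ^ 2 + m1 * x + m2) + 2 * x + m1) * (φ0p - x) ^ α2 /
        (2 * Real.sqrt a2 * Real.sqrt (x ^ 2 + m1 * x + m2) + b2 * x + m3) ^ α2)
    (k : ℝ) (hk : c / 2 < k ∧ k < φ0p)
    (I : Set ℝ) (hI : IsOpen I) (hIconv : Convex ℝ I) (h0I : (0:ℝ) ∈ I)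
    (φ : ℝ → ℝ) (hφ0 : φ 0 = k)
    (hrange : ∀ ξ ∈ I, c / 2 < φ ξ ∧ φ ξ < φ0p)
    (hq : ∀ ξ ∈ I, 0 < (φ ξ) ^ 2 + m1 * φ ξ + m2)
    (hnum : ∀ ξ ∈ I, 0 < 2 * Real.sqrt ((φ ξ) ^ 2 + m1 * φ ξ + m2) + 2 * φ ξ + m1)
    (hden : ∀ ξ ∈ I,
      0 < 2 * Real.sqrt a2 * Real.sqrt ((φ ξ) ^ 2 + m1 * φ ξ + m2) + b2 * φ ξ + m3)
    (horb : ∀ ξ ∈ I, HasDerivAt φ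
      (ε * (φ ξ - φ0p) * Real.sqrt ((φ ξ) ^ 2 + m1 * φ ξ + m2) / (2 * φ ξ)) ξ) :
    ∀ ξ ∈ I, β₂ (φ ξ) = β₂ k * Real.exp (ε * ξ / 2) :=
  osmosis_K22_kink_like_c_pos_g_nonpos_general c g hc hg1 ε s φ0p m1 m2 m3 a2 b2 α2 hs hφ0p hm1 hm2
    hm3 ha2 hb2 hα2 β₂ hβ₂ k I hIconv h0I φ hφ0 hrange hq hnum hden horb
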